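/- There are no Gaussian integers x, y, z with xyz ≠ 0 and gcd(x, y, z) a unit such that x^4 + (1+i)·y^2 = z^4. -/

import Mathlib

open Zsqrtd

/-!
Let `π = 1 + i`, the prime of `ℤ[i]` above `2 = -i π²`. In a primitive solution `x` and `z` are
prime to `π` and coprime, and `z⁴ - x⁴ = π ^ (2k + 1) y'²` with `π ∤ y'`.

For `a, b` prime to `π`, both `a + b` and `a - b` are divisible by `π`, while their sum `2a` is
divisible by exactly `π²`; so if `(a + b)(a - b)` is not exactly divisible by `π²`, one factor is
`π²` times an element prime to `π` and the other takes the rest of the power of `π`. Applied to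
`z² ± x²` and then to `z ± x`, together with coprimality, this makes `z² + x²`, `z + x`, `z - x`
units times squares, and `(z + x)² + (z - x)² = 2 (z² + x²)` gives a solution of
`a⁴ - π ^ (4n + 2) b⁴ = c²` with `a, b` prime to `π`. Splitting `(a² + c)(a² - c)` the same way
lowers `n` by one, and `n = 0` is impossible modulo `4`. The units that appear are fixed modulo
`2`: the only units congruent to `1` modulo `2` are `±1`, and `-1 = i²`.
-/

theorem ne_zero_of_not_dvd {α : Type*} [MonoidWithZero α] {p b : α} (hb : ¬p ∣ b) : b ≠ 0 := by
  rintro rfl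
  exact hb (dvd_zero p)

section General

variable {α : Type*} [CommMonoidWithZero α] [IsCancelMulZero α] {p b c : α} {k l : ℕ}

theorem pow_dvd_pow_mul_iff_le (hp : p ≠ 0) (hb : ¬p ∣ b) : p ^ k ∣ p ^ l * b ↔ k ≤ l := by
  refine ⟨fun h => ?_, fun h => (pow_dvd_pow p h).mul_right b⟩
  by_contra! hlk
  rw [← Nat.add_sub_cancel' hlk.le, pow_add] at h
  exact hb ((dvd_pow_self p (by omega)).trans ((mul_dvd_mul_iff_left (pow_ne_zero l hp)).mp h))

theorem eq_and_eq_of_pow_mul_eq_pow_mul (hp : p ≠ 0) (hb : ¬p ∣ b) (hc : ¬p ∣ c)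
    (h : p ^ k * b = p ^ l * c) : k = l ∧ b = c := by
  obtain rfl : k = l := le_antisymm ((pow_dvd_pow_mul_iff_le hp hc).mp (h ▸ dvd_mul_right _ b))
    ((pow_dvd_pow_mul_iff_le hp hb).mp (h ▸ dvd_mul_right _ c))
  exact ⟨rfl, mul_left_cancel₀ (pow_ne_zero k hp) h⟩

end General

theorem exists_isUnit_pow_eq_of_mul_pow_eq {R : Type*} [CommRing R] [IsDomain R]
    [IsIntegrallyClosed R] {u c d : R} {n : ℕ} (hn : n ≠ 0) (hu : IsUnit u) (hc : c ≠ 0)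
    (h : u * c ^ n = d ^ n) : ∃ w, IsUnit w ∧ u = w ^ n := by
  have hdvd : c ^ n ∣ d ^ n := ⟨u, by rw [← h, mul_comm]⟩
  obtain ⟨w, rfl⟩ := (IsIntegrallyClosed.pow_dvd_pow_iff hn).mp hdvd
  have huw : u = w ^ n := mul_left_cancel₀ (pow_ne_zero n hc) (by rw [← mul_pow, ← h, mul_comm])
  exact ⟨w, (isUnit_pow_iff hn).mp (huw ▸ hu), huw⟩

local notation "ℤ[i]" => GaussianInt

local notation "π" => (1 + sqrtd : GaussianInt)

namespace GaussianInt

theorem sqrtd_sq : (sqrtd : ℤ[i]) ^ 2 = -1 := by decide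

theorem one_add_sqrtd_sq : π ^ 2 = 2 * sqrtd := by decide

theorem two_eq_neg_sqrtd_mul_one_add_sqrtd_sq : (2 : ℤ[i]) = -sqrtd * π ^ 2 := by decide

theorem isUnit_sqrtd : IsUnit (sqrtd : ℤ[i]) := .of_mul_eq_one (-sqrtd) (by decide)

theorem two_dvd_iff {a : ℤ[i]} : 2 ∣ a ↔ 2 ∣ a.re ∧ 2 ∣ a.im := by
  exact_mod_cast intCast_dvd 2 a

theorem one_add_sqrtd_dvd_iff {a : ℤ[i]} : π ∣ a ↔ 2 ∣ a.re + a.im := by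
  constructor
  · rintro ⟨b, rfl⟩
    exact ⟨b.re, by
      simp only [re_mul, im_mul, re_add, im_add, re_one, im_one, re_sqrtd, im_sqrtd]; ring⟩
  · rintro ⟨k, hk⟩
    exact ⟨⟨k, k - a.re⟩, by
      ext <;> simp only [re_mul, im_mul, re_add, im_add, re_one, im_one, re_sqrtd, im_sqrtd] <;>
        omega⟩

theorem prime_one_add_sqrtd : Prime π := by
  have hnorm : (π).norm.natAbs = 2 := by decide
  refine UniqueFactorizationMonoid.irreducible_iff_prime.mp ⟨?_, fun a b hab => ?_⟩
  · rw [← norm_eq_one_iff, hnorm]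
    decide
  · rw [← norm_eq_one_iff, ← norm_eq_one_iff]
    have h2 : a.norm.natAbs * b.norm.natAbs = 2 := by
      rw [← Int.natAbs_mul, ← norm_mul, ← hab, hnorm]
    exact (Nat.prime_two.eq_one_or_self_of_dvd _ (Dvd.intro _ h2)).imp id
      fun ha => by rw [ha] at h2; omega

theorem one_add_sqrtd_ne_zero : π ≠ 0 := prime_one_add_sqrtd.ne_zero

theorem not_one_add_sqrtd_dvd_pow {a : ℤ[i]} (ha : ¬π ∣ a) (n : ℕ) : ¬π ∣ a ^ n :=
  fun h => ha (prime_one_add_sqrtd.dvd_of_dvd_pow h)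

theorem one_add_sqrtd_dvd_add {a b : ℤ[i]} (ha : ¬π ∣ a) (hb : ¬π ∣ b) : π ∣ a + b := by
  rw [one_add_sqrtd_dvd_iff] at *
  simp only [re_add, im_add]
  omega

theorem one_add_sqrtd_dvd_sub {a b : ℤ[i]} (ha : ¬π ∣ a) (hb : ¬π ∣ b) : π ∣ a - b :=
  sub_eq_add_neg a b ▸ one_add_sqrtd_dvd_add ha (by rwa [dvd_neg])

theorem exists_eq_one_add_sqrtd_pow_mul {a : ℤ[i]} (ha : a ≠ 0) :
    ∃ (k : ℕ) (b : ℤ[i]), ¬π ∣ b ∧ a = π ^ k * b := by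
  obtain ⟨b, hb, hπb⟩ :=
    (FiniteMultiplicity.of_prime_left prime_one_add_sqrtd ha).exists_eq_pow_mul_and_not_dvd
  exact ⟨_, b, hπb, hb⟩

theorem eq_one_or_neg_one_or_sqrtd_or_neg_sqrtd_of_isUnit {u : ℤ[i]} (hu : IsUnit u) :
    u = 1 ∨ u = -1 ∨ u = sqrtd ∨ u = -sqrtd := by
  rw [← norm_eq_one_iff' (by norm_num), norm_def] at hu
  obtain ⟨x, y⟩ := u
  have hx : -1 ≤ x ∧ x ≤ 1 := by constructor <;> nlinarith [mul_self_nonneg x, mul_self_nonneg y]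
  have hy : -1 ≤ y ∧ y ≤ 1 := by constructor <;> nlinarith [mul_self_nonneg x, mul_self_nonneg y]
  obtain ⟨hx₁, hx₂⟩ := hx
  obtain ⟨hy₁, hy₂⟩ := hy
  interval_cases x <;> interval_cases y <;> simp_all <;> decide

theorem pow_four_eq_one_of_isUnit {u : ℤ[i]} (hu : IsUnit u) : u ^ 4 = 1 := by
  rcases eq_one_or_neg_one_or_sqrtd_or_neg_sqrtd_of_isUnit hu with rfl | rfl | rfl | rfl <;>
    decide

theorem eq_one_or_neg_one_of_two_dvd_sub_one {u : ℤ[i]} (hu : IsUnit u) (h : 2 ∣ u - 1) :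
    u = 1 ∨ u = -1 := by
  rw [two_dvd_iff] at h
  rcases eq_one_or_neg_one_or_sqrtd_or_neg_sqrtd_of_isUnit hu with rfl | rfl | rfl | rfl <;>
    simp_all

theorem two_dvd_sq_sub_one {c : ℤ[i]} (hc : ¬π ∣ c) : 2 ∣ c ^ 2 - 1 := by
  have hone : ¬π ∣ 1 := prime_one_add_sqrtd.not_dvd_one
  obtain ⟨u, hu⟩ := one_add_sqrtd_dvd_sub hc hone
  obtain ⟨v, hv⟩ := one_add_sqrtd_dvd_add hc hone
  exact ⟨sqrtd * u * v, by linear_combination (c + 1) * hu + π * u * hv + u * v * one_add_sqrtd_sq⟩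

theorem two_dvd_pow_four_sub_one {c : ℤ[i]} (hc : ¬π ∣ c) : 2 ∣ c ^ 4 - 1 :=
  (two_dvd_sq_sub_one hc).trans ⟨c ^ 2 + 1, by ring⟩

theorem four_dvd_im_sq {c : ℤ[i]} (hc : ¬π ∣ c) : 4 ∣ (c ^ 2).im := by
  rw [one_add_sqrtd_dvd_iff, ← even_iff_two_dvd, Int.even_add] at hc
  obtain ⟨k, hk⟩ : Even (c.re * c.im) := Int.even_mul.mpr (by tauto)
  exact ⟨k, by simp only [pow_two, im_mul]; linear_combination 2 * hk⟩

theorem isCoprime_two_of_not_dvd {a : ℤ[i]} (ha : ¬π ∣ a) : IsCoprime a 2 := by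
  rw [two_eq_neg_sqrtd_mul_one_add_sqrtd_sq, isCoprime_mul_unit_left_right isUnit_sqrtd.neg]
  exact (prime_one_add_sqrtd.coprime_iff_not_dvd.mpr ha).symm.pow_right

theorem isCoprime_of_add_eq_of_sub_eq {a b X Y : ℤ[i]} {k l : ℕ} (hab : IsCoprime a b)
    (hX : ¬π ∣ X) (hadd : a + b = π ^ k * X) (hsub : a - b = π ^ l * Y) : IsCoprime X Y := by
  obtain ⟨u, v, huv⟩ := hab
  obtain ⟨u', v', huv'⟩ := isCoprime_two_of_not_dvd hX
  exact ⟨u' + v' * (u + v) * π ^ k, v' * (u - v) * π ^ l, by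
    linear_combination huv' + 2 * v' * huv - v' * (u + v) * hadd - v' * (u - v) * hsub⟩

theorem exists_add_eq_and_sub_eq_of_mul_eq {a b W : ℤ[i]} {N : ℕ} (ha : ¬π ∣ a) (hb : ¬π ∣ b)
    (hW : ¬π ∣ W) (hN : N ≠ 2) (h : (a + b) * (a - b) = π ^ N * W) :
    ∃ (b' X Y : ℤ[i]) (t : ℕ), (b' = b ∨ b' = -b) ∧ ¬π ∣ X ∧ ¬π ∣ Y ∧ X * Y = W ∧
      N = t + 4 ∧ a + b' = π ^ 2 * X ∧ a - b' = π ^ (t + 2) * Y := by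
  have hπ := one_add_sqrtd_ne_zero
  have hprod : (a + b) * (a - b) ≠ 0 := h ▸ mul_ne_zero (pow_ne_zero N hπ) (ne_zero_of_not_dvd hW)
  obtain ⟨s, X, hX, hsX⟩ := exists_eq_one_add_sqrtd_pow_mul (left_ne_zero_of_mul hprod)
  obtain ⟨r, Y, hY, hrY⟩ := exists_eq_one_add_sqrtd_pow_mul (right_ne_zero_of_mul hprod)
  obtain ⟨hsr, hXY⟩ : s + r = N ∧ X * Y = W :=
    eq_and_eq_of_pow_mul_eq_pow_mul hπ (prime_one_add_sqrtd.not_dvd_mul hX hY) hW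
      (by rw [← h, hsX, hrY]; ring)
  have hdvd_iff {k m : ℕ} {Z : ℤ[i]} (hZ : ¬π ∣ Z) : π ^ k ∣ π ^ m * Z ↔ k ≤ m :=
    pow_dvd_pow_mul_iff_le hπ hZ
  have hs : 1 ≤ s := (hdvd_iff hX).mp (by rw [pow_one, ← hsX]; exact one_add_sqrtd_dvd_add ha hb)
  have hr : 1 ≤ r := (hdvd_iff hY).mp (by rw [pow_one, ← hrY]; exact one_add_sqrtd_dvd_sub ha hb)
  have hsr2 : 2 ≤ s ↔ 2 ≤ r := by
    rw [← hdvd_iff hX, ← hdvd_iff hY, ← hsX, ← hrY]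
    exact dvd_iff_dvd_of_dvd_sub
      ⟨-sqrtd * b, by linear_combination b * two_eq_neg_sqrtd_mul_one_add_sqrtd_sq⟩
  have hsr3 : ¬(3 ≤ s ∧ 3 ≤ r) := by
    rintro ⟨hs3, hr3⟩
    have h2a : (a + b) + (a - b) = π ^ 2 * (-sqrtd * a) := by
      linear_combination a * two_eq_neg_sqrtd_mul_one_add_sqrtd_sq
    have h3 : π ^ 3 ∣ π ^ 2 * (-sqrtd * a) := by
      rw [← h2a, hsX, hrY]
      exact dvd_add ((hdvd_iff hX).mpr hs3) ((hdvd_iff hY).mpr hr3)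
    exact absurd ((hdvd_iff (by rwa [isUnit_sqrtd.neg.dvd_mul_left])).mp h3) (by norm_num)
  rcases (by omega : (s = 2 ∧ 2 ≤ r) ∨ (r = 2 ∧ 2 ≤ s)) with ⟨rfl, hr2⟩ | ⟨rfl, hs2⟩
  · exact ⟨b, X, Y, r - 2, Or.inl rfl, hX, hY, hXY, by omega, hsX,
      by rw [hrY, Nat.sub_add_cancel hr2]⟩
  · exact ⟨-b, Y, X, s - 2, Or.inr rfl, hY, hX, by rw [mul_comm, hXY], by omega,
      by rw [← sub_eq_add_neg, hrY], by rw [sub_neg_eq_add, hsX, Nat.sub_add_cancel hs2]⟩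

theorem not_one_add_sqrtd_dvd_of_pow_four_sub_eq_sq {a b c : ℤ[i]} {k : ℕ} (ha : ¬π ∣ a)
    (h : a ^ 4 - π ^ (k + 1) * b = c ^ 2) : ¬π ∣ c := fun hc =>
  not_one_add_sqrtd_dvd_pow ha 4 (by
    rw [show a ^ 4 = c ^ 2 + π ^ (k + 1) * b by rw [← h]; ring]
    exact dvd_add (dvd_pow hc two_ne_zero) ((dvd_pow_self π k.succ_ne_zero).mul_right b))

def QuarticEqSolvable (n : ℕ) : Prop :=
  ∃ a b c : ℤ[i], ¬π ∣ a ∧ ¬π ∣ b ∧ IsCoprime a c ∧ a ^ 4 - π ^ (4 * n + 2) * b ^ 4 = c ^ 2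

theorem not_quarticEqSolvable_zero : ¬QuarticEqSolvable 0 := by
  rintro ⟨a, b, c, ha, hb, -, h⟩
  have hc := not_one_add_sqrtd_dvd_of_pow_four_sub_eq_sq ha h
  have him : ((a ^ 2) ^ 2).im - 2 * ((b ^ 2) ^ 2).re = (c ^ 2).im := by
    rw [← h, one_add_sqrtd_sq]
    simp [← pow_mul]
  have ha4 := four_dvd_im_sq (not_one_add_sqrtd_dvd_pow ha 2)
  have hb4 := four_dvd_im_sq (not_one_add_sqrtd_dvd_pow hb 2)
  have hb4' := one_add_sqrtd_dvd_iff.not.mp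
    (not_one_add_sqrtd_dvd_pow (not_one_add_sqrtd_dvd_pow hb 2) 2)
  have hc2 := four_dvd_im_sq hc
  omega

theorem quarticEqSolvable_of_unit_mul_add {n : ℕ} {U V p q r : ℤ[i]} (hU : IsUnit U)
    (hUV : U * V = -1) (hp : ¬π ∣ p) (hq : ¬π ∣ q) (hr : ¬π ∣ r) (hpr : IsCoprime p r)
    (h : U * p ^ 4 + π ^ (4 * n + 2) * (V * q ^ 4) = r ^ 2) : QuarticEqSolvable n := by
  have h2 : 2 ∣ U - 1 := by
    obtain ⟨k, hk⟩ := two_dvd_sq_sub_one hr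
    obtain ⟨l, hl⟩ := two_dvd_pow_four_sub_one hp
    exact ⟨k - U * l - sqrtd * π ^ (4 * n) * V * q ^ 4, by
      linear_combination h + hk - U * hl - π ^ (4 * n) * V * q ^ 4 * one_add_sqrtd_sq⟩
  rcases eq_one_or_neg_one_of_two_dvd_sub_one hU h2 with rfl | rfl
  · exact ⟨p, q, r, hp, hq, hpr, by linear_combination h - π ^ (4 * n + 2) * q ^ 4 * hUV⟩
  · refine ⟨p, q, sqrtd * r, hp, hq, (isCoprime_mul_unit_left_right isUnit_sqrtd _ _).mpr hpr, ?_⟩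
    linear_combination -h - π ^ (4 * n + 2) * q ^ 4 * hUV - r ^ 2 * sqrtd_sq

theorem QuarticEqSolvable.of_succ {n : ℕ} (h : QuarticEqSolvable (n + 1)) :
    QuarticEqSolvable n := by
  obtain ⟨a, b, c, ha, hb, hac, h⟩ := h
  obtain ⟨c', X, Y, t, hc', hX, hY, hXY, ht, hadd, hsub⟩ :=
    exists_add_eq_and_sub_eq_of_mul_eq (not_one_add_sqrtd_dvd_pow ha 2)
      (not_one_add_sqrtd_dvd_of_pow_four_sub_eq_sq ha h) (not_one_add_sqrtd_dvd_pow hb 4)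
      (N := 4 * n + 6) (by omega) (by linear_combination h)
  obtain rfl : t = 4 * n + 2 := by omega
  have hac' : IsCoprime a c' := by rcases hc' with rfl | rfl; exacts [hac, hac.neg_right]
  have hXY' : IsCoprime X Y := isCoprime_of_add_eq_of_sub_eq hac'.pow_left hX hadd hsub
  obtain ⟨p, α, rfl⟩ := exists_associated_pow_of_mul_eq_pow' hXY' hXY
  obtain ⟨q, β, rfl⟩ := exists_associated_pow_of_mul_eq_pow' hXY'.symm (by rw [mul_comm, hXY])
  have hp : ¬π ∣ p := fun hp => hX ((dvd_pow hp four_ne_zero).mul_right _)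
  have hq : ¬π ∣ q := fun hq => hY ((dvd_pow hq four_ne_zero).mul_right _)
  have hαβ : (α * β : ℤ[i]) = 1 := by
    obtain ⟨w, hw, hαβ⟩ := exists_isUnit_pow_eq_of_mul_pow_eq four_ne_zero
      (α.isUnit.mul β.isUnit) (mul_ne_zero (ne_zero_of_not_dvd hp) (ne_zero_of_not_dvd hq))
      (by rw [← hXY]; ring)
    rw [hαβ, pow_four_eq_one_of_isUnit hw]
  have hpa : IsCoprime p a := by
    have haX : IsCoprime a (π ^ 2 * (p ^ 4 * α)) := by
      simpa only [← hadd, add_comm, ← pow_two] using hac'.add_mul_left_right a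
    exact ((IsCoprime.pow_right_iff four_pos).mp haX.of_mul_right_right.of_mul_right_left).symm
  refine quarticEqSolvable_of_unit_mul_add (U := sqrtd * (α : ℤ[i])) (V := sqrtd * (β : ℤ[i]))
    (isUnit_sqrtd.mul α.isUnit) (by linear_combination (α * β : ℤ[i]) * sqrtd_sq - hαβ)
    hp hq ha hpa ?_
  apply mul_left_cancel₀ (pow_ne_zero 2 one_add_sqrtd_ne_zero)
  linear_combination -sqrtd * (hadd + hsub) - a ^ 2 * one_add_sqrtd_sq

theorem not_quarticEqSolvable (n : ℕ) : ¬QuarticEqSolvable n := by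
  induction n with
  | zero => exact not_quarticEqSolvable_zero
  | succ n ih => exact fun h => ih h.of_succ

theorem quarticEqSolvable_of_sq_add_sq_eq {z x X A B y : ℤ[i]} {m : ℕ} (hX : ¬π ∣ X)
    (hA : ¬π ∣ A) (hB : ¬π ∣ B) (hXAB : IsCoprime X (A * B)) (hAB : IsCoprime A B)
    (hsq : z ^ 2 + x ^ 2 = π ^ 2 * X) (hadd : z + x = π ^ 2 * A)
    (hsub : z - x = π ^ (2 * m + 3) * B) (hy : X * (A * B) = y ^ 2) : QuarticEqSolvable m := by
  have hAXB : IsCoprime A (X * B) := hXAB.of_mul_right_left.symm.mul_right hAB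
  have hBXA : IsCoprime B (X * A) := hXAB.of_mul_right_right.symm.mul_right hAB.symm
  obtain ⟨f, κ, rfl⟩ := exists_associated_pow_of_mul_eq_pow' hXAB hy
  obtain ⟨g, l, rfl⟩ := exists_associated_pow_of_mul_eq_pow' hAXB (by rw [← hy]; ring)
  obtain ⟨h, l', rfl⟩ := exists_associated_pow_of_mul_eq_pow' hBXA (by rw [← hy]; ring)
  have hf : ¬π ∣ f := fun hf => hX ((dvd_pow hf two_ne_zero).mul_right _)
  have hg : ¬π ∣ g := fun hg => hA ((dvd_pow hg two_ne_zero).mul_right _)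
  have hh : ¬π ∣ h := fun hh => hB ((dvd_pow hh two_ne_zero).mul_right _)
  have hκll : ((κ : ℤ[i]) * l * l') ^ 2 = 1 := by
    obtain ⟨w, hw, hκll⟩ := exists_isUnit_pow_eq_of_mul_pow_eq two_ne_zero
      ((κ.isUnit.mul l.isUnit).mul l'.isUnit)
      (mul_ne_zero (mul_ne_zero (ne_zero_of_not_dvd hf) (ne_zero_of_not_dvd hg))
        (ne_zero_of_not_dvd hh))
      (by rw [← hy]; ring)
    rw [hκll, ← pow_mul, pow_four_eq_one_of_isUnit hw]
  have hκ := pow_four_eq_one_of_isUnit κ.isUnit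
  have hE : (l : ℤ[i]) ^ 2 * g ^ 4 + π ^ (4 * m + 2) * ((l' : ℤ[i]) ^ 2 * h ^ 4) =
      -sqrtd * (κ : ℤ[i]) * f ^ 2 := by
    apply mul_left_cancel₀ (pow_ne_zero 4 one_add_sqrtd_ne_zero)
    linear_combination -(z + x + π ^ 2 * (g ^ 2 * l)) * hadd
      - (z - x + π ^ (2 * m + 3) * (h ^ 2 * l')) * hsub + 2 * hsq
      + π ^ 2 * (f ^ 2 * κ) * two_eq_neg_sqrtd_mul_one_add_sqrtd_sq
  -- `W = -sqrtd * κ` is a unit with `W⁴ = 1`; multiplying `hE` by `W³` normalises its right side.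
  refine quarticEqSolvable_of_unit_mul_add (U := (-sqrtd * (κ : ℤ[i])) ^ 3 * (l : ℤ[i]) ^ 2)
    (V := (-sqrtd * (κ : ℤ[i])) ^ 3 * (l' : ℤ[i]) ^ 2)
    (((isUnit_sqrtd.neg.mul κ.isUnit).pow 3).mul (l.isUnit.pow 2)) ?_ hg hh hf ?_ ?_
  · linear_combination
      (sqrtd ^ 4 - sqrtd ^ 2 + 1) * (κ : ℤ[i]) ^ 6 * ((l : ℤ[i]) * l') ^ 2 * sqrtd_sq
      - ((κ : ℤ[i]) * l * l') ^ 2 * hκ - hκll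
  · exact (IsCoprime.pow_iff two_pos two_pos).mp
      hXAB.symm.of_mul_left_left.of_mul_left_left.of_mul_right_left
  · linear_combination (-sqrtd * (κ : ℤ[i])) ^ 3 * hE
      + f ^ 2 * ((sqrtd ^ 2 - 1) * (κ : ℤ[i]) ^ 4 * sqrtd_sq + hκ)

theorem exists_quarticEqSolvable_of_pow_four_sub_pow_four_eq {z x y : ℤ[i]} {k : ℕ}
    (hz : ¬π ∣ z) (hx : ¬π ∣ x) (hzx : IsCoprime z x) (hy : ¬π ∣ y)
    (h : z ^ 4 - x ^ 4 = π ^ (2 * k + 1) * y ^ 2) : ∃ m, QuarticEqSolvable m := by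
  obtain ⟨b, X, Y, t, hb, hX, hY, hXY, ht, hsq_add, hsq_sub⟩ :=
    exists_add_eq_and_sub_eq_of_mul_eq (not_one_add_sqrtd_dvd_pow hz 2)
      (not_one_add_sqrtd_dvd_pow hx 2) (not_one_add_sqrtd_dvd_pow hy 2) (N := 2 * k + 1)
      (by omega) (by linear_combination h)
  obtain ⟨x₁, hx₁, hzx₁, rfl⟩ : ∃ x₁, ¬π ∣ x₁ ∧ IsCoprime z x₁ ∧ b = x₁ ^ 2 := by
    rcases hb with rfl | rfl
    · exact ⟨x, hx, hzx, rfl⟩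
    · exact ⟨sqrtd * x, by rwa [isUnit_sqrtd.dvd_mul_left],
        (isCoprime_mul_unit_left_right isUnit_sqrtd _ _).mpr hzx,
        by linear_combination -x ^ 2 * sqrtd_sq⟩
  obtain ⟨x₂, A, B, s, hx₂, hA, hB, hAB, hs, hadd, hsub⟩ :=
    exists_add_eq_and_sub_eq_of_mul_eq hz hx₁ hY (N := t + 2) (by omega)
      (by linear_combination hsq_sub)
  obtain ⟨m, rfl⟩ : ∃ m, s = 2 * m + 1 := ⟨s / 2, by omega⟩
  have hzx₂ : IsCoprime z x₂ := by rcases hx₂ with rfl | rfl; exacts [hzx₁, hzx₁.neg_right]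
  have hsq : z ^ 2 + x₂ ^ 2 = π ^ 2 * X := by rcases hx₂ with rfl | rfl <;> simpa using hsq_add
  have hXY' : IsCoprime X Y :=
    isCoprime_of_add_eq_of_sub_eq hzx₁.pow_left.pow_right hX hsq_add hsq_sub
  exact ⟨m, quarticEqSolvable_of_sq_add_sq_eq hX hA hB (hAB ▸ hXY')
    (isCoprime_of_add_eq_of_sub_eq hzx₂ hA hadd hsub) hsq hadd hsub (hAB ▸ hXY)⟩

theorem not_dvd_and_isCoprime_of_pow_four_add_eq {x y z : ℤ[i]}
    (hgcd : ∀ d : ℤ[i], d ∣ x → d ∣ y → d ∣ z → IsUnit d) (h : x ^ 4 + π * y ^ 2 = z ^ 4) :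
    ¬π ∣ x ∧ ¬π ∣ z ∧ IsCoprime z x := by
  have hπ := prime_one_add_sqrtd
  have hy : π * y ^ 2 = z ^ 4 - x ^ 4 := by linear_combination h
  have hx : ¬π ∣ x := by
    intro hx
    have hz : π ∣ z :=
      hπ.dvd_of_dvd_pow (h ▸ dvd_add (dvd_pow hx four_ne_zero) (dvd_mul_right π _))
    have hπ4 {w : ℤ[i]} (hw : π ∣ w) : π ^ 2 ∣ w ^ 4 :=
      (pow_dvd_pow π (by norm_num)).trans (pow_dvd_pow_of_dvd hw 4)
    have hπy : π ∣ y := hπ.dvd_of_dvd_pow <| (mul_dvd_mul_iff_left hπ.ne_zero).mp <| by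
      rw [← pow_two, hy]
      exact dvd_sub (hπ4 hz) (hπ4 hx)
    exact hπ.not_isUnit (hgcd π hx hπy hz)
  have hz : ¬π ∣ z := fun hz => hx <| hπ.dvd_of_dvd_pow <| by
    rw [show x ^ 4 = z ^ 4 - π * y ^ 2 by linear_combination h]
    exact dvd_sub (dvd_pow hz four_ne_zero) (dvd_mul_right π _)
  refine ⟨hx, hz, isCoprime_of_prime_dvd (fun h0 => ne_zero_of_not_dvd hz h0.1) ?_⟩
  intro p hp hpz hpx
  rcases hp.dvd_mul.mp (hy ▸ dvd_sub (dvd_pow hpz four_ne_zero) (dvd_pow hpx four_ne_zero))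
    with hpπ | hpy
  · exact hx ((hp.associated_of_dvd hπ hpπ).symm.dvd.trans hpx)
  · exact hp.not_isUnit (hgcd p hpx (hp.dvd_of_dvd_pow hpy) hpz)

end GaussianInt

open GaussianInt

/-- The equation `x⁴ + (1+i)·y² = z⁴` has no nontrivial solutions over the
Gaussian integers. -/
theorem no_nontrivial_solution_x4_add_one_add_i_y2_eq_z4 :
    ¬ ∃ x y z : GaussianInt, x * y * z ≠ 0 ∧
      (∀ d : GaussianInt, d ∣ x → d ∣ y → d ∣ z → IsUnit d) ∧
      x ^ 4 + (1 + sqrtd) * y ^ 2 = z ^ 4 := by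
  rintro ⟨x, y, z, hxyz, hgcd, h⟩
  obtain ⟨hx, hz, hzx⟩ := not_dvd_and_isCoprime_of_pow_four_add_eq hgcd h
  obtain ⟨k, y', hy', rfl⟩ :=
    exists_eq_one_add_sqrtd_pow_mul (right_ne_zero_of_mul (left_ne_zero_of_mul hxyz))
  obtain ⟨m, hm⟩ := exists_quarticEqSolvable_of_pow_four_sub_pow_four_eq (k := k) hz hx hzx hy'
    (by linear_combination -h)
  exact not_quarticEqSolvable m hm
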